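/- For every n ≥ 2 and every rational m, the discriminant of f_m^{(n)}(X) with respect to X equals 3^{(n−1)(n−2)/2}·n^n·(m²+m+1)^{n−1}. -/

import Mathlib

open Polynomial

/-- h(i) = 0, -1, -1, 0, 1, 1 according as i = 0,1,2,3,4,5 (mod 6). -/
def hcoef (i : ℕ) : ℤ :=
  match i % 6 with
  | 0 => 0 | 1 => -1 | 2 => -1 | 3 => 0 | 4 => 1 | _ => 1

/-- g(i) = 1, -m, -m-1, -1, m, m+1 according as i = 0,1,2,3,4,5 (mod 6). -/
def gcoef (m : ℚ) (i : ℕ) : ℚ :=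
  match i % 6 with
  | 0 => 1 | 1 => -m | 2 => -m - 1 | 3 => -1 | 4 => m | _ => m + 1

/-- f_m^{(n)}(X) = sum_{i=0}^n C(n,i) X^i g(n-i). -/
noncomputable def fpol (m : ℚ) (n : ℕ) : ℚ[X] :=
  ∑ i ∈ Finset.range (n + 1), C ((n.choose i : ℚ) * gcoef m (n - i)) * X ^ i

/-- r^{(n)}(X) = sum_{i=0}^n C(n,i) X^i h(n-i). -/
noncomputable def rpol (n : ℕ) : ℤ[X] :=
  ∑ i ∈ Finset.range (n + 1), C ((n.choose i : ℤ) * hcoef (n - i)) * X ^ i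

/-- Sylvester matrix of `f` (regarded as of degree `m`) and `g` (regarded as of
degree `n`): the first `n` rows contain the coefficients of `f` (in decreasing
order, shifted), the last `m` rows those of `g`. -/
def sylvester {R : Type*} [CommRing R] (m n : ℕ) (f g : R[X]) :
    Matrix (Fin (n + m)) (Fin (n + m)) R :=
  Matrix.of fun i j =>
    if (i : ℕ) < n then
      (if (i : ℕ) ≤ (j : ℕ) ∧ (j : ℕ) ≤ (i : ℕ) + m then f.coeff (m + i - j) else 0)
    else
      (if (i : ℕ) - n ≤ (j : ℕ) ∧ (j : ℕ) ≤ ((i : ℕ) - n) + n then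
        g.coeff (n + ((i : ℕ) - n) - j) else 0)

/-- The resultant of `f` (of degree `m`) and `g` (of degree `n`), as the
determinant of the Sylvester matrix. -/
def res {R : Type*} [CommRing R] (m n : ℕ) (f g : R[X]) : R :=
  (sylvester m n f g).det

open Finset

section SylvesterDet

lemma prod_Ioi_rev {G : Type*} [CommMonoid G] {n : ℕ} (F : Fin n → Fin n → G) :
    (∏ i : Fin n, ∏ j ∈ Finset.Ioi i, F (Fin.rev j) (Fin.rev i))
      = ∏ i : Fin n, ∏ j ∈ Finset.Ioi i, F i j := by
  rw [Finset.prod_sigma', Finset.prod_sigma']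
  refine Finset.prod_nbij' (fun p => ⟨Fin.rev p.2, Fin.rev p.1⟩)
    (fun p => ⟨Fin.rev p.2, Fin.rev p.1⟩) ?_ ?_ ?_ ?_ ?_ <;>
    simp [Fin.rev_lt_rev]

lemma detRV {K : Type*} [CommRing K] {n : ℕ} (v : Fin n → K) :
    (Matrix.of fun i j : Fin n => v j ^ (n - 1 - (i : ℕ))).det
      = ∏ i : Fin n, ∏ j ∈ Finset.Ioi i, (v i - v j) := by
  have h : (Matrix.of fun i j : Fin n => v j ^ (n - 1 - (i : ℕ)))
      = ((Matrix.vandermonde (v ∘ Fin.rev)).transpose).submatrix Fin.revPerm Fin.revPerm := by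
    ext i j
    simp only [Matrix.of_apply, Matrix.submatrix_apply, Matrix.transpose_apply,
      Matrix.vandermonde, Function.comp, Fin.revPerm_apply, Fin.rev_rev]
    congr 1
    rw [Fin.val_rev]
    omega
  rw [h, Matrix.det_submatrix_equiv_self, Matrix.det_transpose, Matrix.det_vandermonde]
  rw [← prod_Ioi_rev (fun a b => v a - v b)]
  simp [Function.comp]

lemma Ioi_prod_ite {G : Type*} [CommMonoid G] {D : ℕ} (i : Fin D) (f : Fin D → G) :
    ∏ j ∈ Finset.Ioi i, f j = ∏ j : Fin D, if i < j then f j else 1 := by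
  rw [← Finset.prod_filter]
  congr 1
  ext j
  simp

lemma prod_pairs_append {K : Type*} [CommRing K] {N M : ℕ} (y : Fin N → K) (x : Fin M → K) :
    (∏ i : Fin (N + M), ∏ j ∈ Finset.Ioi i, (Fin.append y x i - Fin.append y x j))
      = ((∏ i : Fin N, ∏ j ∈ Finset.Ioi i, (y i - y j)) *
          (∏ i : Fin M, ∏ j ∈ Finset.Ioi i, (x i - x j))) *
          ∏ k : Fin N, ∏ l : Fin M, (y k - x l) := by
  have h2 : ∀ (a : Fin N) (b : Fin M), (a : ℕ) < N + (b : ℕ) :=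
    fun a b => lt_of_lt_of_le a.2 (Nat.le_add_right _ _)
  have h3 : ∀ (a : Fin M) (b : Fin N), ¬ (N + (a : ℕ) < (b : ℕ)) := by
    intro a b; have := b.2; omega
  simp only [Ioi_prod_ite]
  rw [Fin.prod_univ_add]
  simp only [Fin.prod_univ_add (fun j => _)]
  simp only [Fin.append_left, Fin.append_right, Fin.lt_def, Fin.coe_castAdd, Fin.coe_natAdd]
  simp only [h2, h3, if_true, if_false, Finset.prod_const_one, one_mul, mul_one,
    Nat.add_lt_add_iff_left]
  rw [Finset.prod_mul_distrib]
  ring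

lemma rowsum {K : Type*} [CommRing K] (p : K[X]) (D : ℕ) (hp : p.natDegree ≤ D)
    (a b : ℕ) (s : K) (hab : a + D ≤ b) :
    ∑ j ∈ Finset.range (b + 1),
        (if a ≤ j ∧ j ≤ a + D then p.coeff (D + a - j) else 0) * s ^ (b - j)
      = s ^ (b - (a + D)) * p.eval s := by
  rw [Polynomial.eval_eq_sum_range' (Nat.lt_succ_of_le hp), Finset.mul_sum]
  simp only [ite_mul, zero_mul]
  rw [← Finset.sum_filter]
  have hset : (Finset.range (b + 1)).filter (fun j => a ≤ j ∧ j ≤ a + D)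
      = Finset.Icc a (a + D) := by
    ext j; simp; omega
  rw [hset]
  refine Finset.sum_nbij' (fun j => D + a - j) (fun e => D + a - e) ?_ ?_ ?_ ?_ ?_
  · intro j hj; simp at hj ⊢; omega
  · intro e he; simp at he ⊢; omega
  · intro j hj; simp at hj ⊢; omega
  · intro e he; simp at he ⊢; omega
  · intro j hj
    simp only [Finset.mem_Icc] at hj
    have hbj : b - j = (b - (a + D)) + (D + a - j) := by omega
    rw [hbj, pow_add]
    ring

theorem sylvester_det {K : Type*} [Field K] {M N : ℕ} (hM : 0 < M) (hN : 0 < N)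
    (x : Fin M → K) (y : Fin N → K) (d : K)
    (hinj : Function.Injective (Fin.append y x)) :
    (sylvester M N (∏ i, (X - C (x i))) (C d * ∏ j, (X - C (y j)))).det
      = ∏ i, Polynomial.eval (x i) (C d * ∏ j : Fin N, (X - C (y j))) := by
  set f : K[X] := ∏ i : Fin M, (X - C (x i)) with hf
  set g : K[X] := C d * ∏ j : Fin N, (X - C (y j)) with hg
  have hfd : f.natDegree ≤ M := by
    refine le_trans (Polynomial.natDegree_prod_le _ _) ?_
    simp [Polynomial.natDegree_X_sub_C]
  have hgd : g.natDegree ≤ N := by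
    refine le_trans (Polynomial.natDegree_mul_le) ?_
    simp only [Polynomial.natDegree_C, zero_add]
    refine le_trans (Polynomial.natDegree_prod_le _ _) ?_
    simp [Polynomial.natDegree_X_sub_C]
  have hfx : ∀ b, f.eval (x b) = 0 := by
    intro b
    rw [hf, Polynomial.eval_prod]
    exact Finset.prod_eq_zero (Finset.mem_univ b) (by simp)
  have hgy : ∀ b, g.eval (y b) = 0 := by
    intro b
    rw [hg, Polynomial.eval_mul, Polynomial.eval_prod]
    rw [Finset.prod_eq_zero (Finset.mem_univ b) (by simp)]
    ring
  set t : Fin (N + M) → K := Fin.append y x with ht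
  set V : Matrix (Fin (N + M)) (Fin (N + M)) K :=
    Matrix.of fun (j k : Fin (N + M)) => t k ^ (N + M - 1 - (j : ℕ)) with hV
  have hNM : N + M = (N + M - 1) + 1 := by omega
  have hSV : sylvester M N f g * V = Matrix.of fun (i k : Fin (N + M)) =>
      if (i : ℕ) < N then t k ^ (N - 1 - (i : ℕ)) * f.eval (t k)
      else t k ^ (M - 1 - ((i : ℕ) - N)) * g.eval (t k) := by
    ext i k
    rw [Matrix.mul_apply]
    by_cases hi : (i : ℕ) < N
    · simp only [_root_.sylvester, Matrix.of_apply, hV, if_pos hi, Matrix.of_apply]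
      rw [Fin.sum_univ_eq_sum_range (fun jn =>
        (if (i : ℕ) ≤ jn ∧ jn ≤ (i : ℕ) + M then f.coeff (M + (i : ℕ) - jn) else 0)
          * t k ^ (N + M - 1 - jn)) (N + M)]
      have h1 := rowsum f M hfd (i : ℕ) (N + M - 1) (t k) (by omega)
      rw [← hNM] at h1
      rw [h1]
      congr 2
      omega
    · simp only [_root_.sylvester, Matrix.of_apply, hV, if_neg hi, Matrix.of_apply]
      rw [Fin.sum_univ_eq_sum_range (fun jn =>
        (if (i : ℕ) - N ≤ jn ∧ jn ≤ ((i : ℕ) - N) + N then g.coeff (N + ((i : ℕ) - N) - jn) else 0)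
          * t k ^ (N + M - 1 - jn)) (N + M)]
      have h1 := rowsum g N hgd ((i : ℕ) - N) (N + M - 1) (t k) (by have := i.2; omega)
      rw [← hNM] at h1
      rw [h1]
      have h2 := i.isLt
      congr 2
      omega
  set P : Matrix (Fin N) (Fin N) K :=
    Matrix.of fun a b => y b ^ (N - 1 - (a : ℕ)) * f.eval (y b) with hP
  set Q : Matrix (Fin M) (Fin M) K :=
    Matrix.of fun a b => x b ^ (M - 1 - (a : ℕ)) * g.eval (x b) with hQ
  have hsub : (sylvester M N f g * V).submatrix (finSumFinEquiv (m := N) (n := M))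
      (finSumFinEquiv (m := N) (n := M)) = Matrix.fromBlocks P 0 0 Q := by
    ext i j
    rcases i with a | a <;> rcases j with b | b <;>
      simp only [Matrix.submatrix_apply, finSumFinEquiv_apply_left, finSumFinEquiv_apply_right,
        Matrix.fromBlocks_apply₁₁, Matrix.fromBlocks_apply₁₂, Matrix.fromBlocks_apply₂₁,
        Matrix.fromBlocks_apply₂₂, hSV, Matrix.of_apply] <;>
      simp only [Fin.coe_castAdd, Fin.coe_natAdd, ht]
    · rw [if_pos a.2, Fin.append_left, hP]; rfl
    · rw [if_pos a.2, Fin.append_right, hfx]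
      simp
    · rw [if_neg (by omega), Fin.append_left, hgy]
      simp
    · rw [if_neg (by omega), Fin.append_right, hQ]
      simp only [Matrix.of_apply, Matrix.zero_apply]
      congr 2
      omega
  have hdetP : P.det = (∏ b, f.eval (y b)) *
      (∏ i : Fin N, ∏ j ∈ Finset.Ioi i, (y i - y j)) := by
    have : P = (Matrix.of fun a b : Fin N => y b ^ (N - 1 - (a : ℕ)))
        * Matrix.diagonal (fun b => f.eval (y b)) := by
      ext a b; rw [Matrix.mul_diagonal]; rfl
    rw [this, Matrix.det_mul, Matrix.det_diagonal, detRV]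
    ring
  have hdetQ : Q.det = (∏ b, g.eval (x b)) *
      (∏ i : Fin M, ∏ j ∈ Finset.Ioi i, (x i - x j)) := by
    have : Q = (Matrix.of fun a b : Fin M => x b ^ (M - 1 - (a : ℕ)))
        * Matrix.diagonal (fun b => g.eval (x b)) := by
      ext a b; rw [Matrix.mul_diagonal]; rfl
    rw [this, Matrix.det_mul, Matrix.det_diagonal, detRV]
    ring
  have hfy : ∀ b, f.eval (y b) = ∏ l, (y b - x l) := by
    intro b; rw [hf, Polynomial.eval_prod]; simp
  have htprod : ∏ i : Fin (N + M), ∏ j ∈ Finset.Ioi i, (t i - t j)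
      = ((∏ i : Fin N, ∏ j ∈ Finset.Ioi i, (y i - y j)) *
          (∏ i : Fin M, ∏ j ∈ Finset.Ioi i, (x i - x j))) *
          ∏ k : Fin N, ∏ l : Fin M, (y k - x l) := prod_pairs_append y x
  have htne : (∏ i : Fin (N + M), ∏ j ∈ Finset.Ioi i, (t i - t j)) ≠ 0 := by
    rw [Finset.prod_ne_zero_iff]
    intro i _
    rw [Finset.prod_ne_zero_iff]
    intro j hj
    exact sub_ne_zero.mpr (fun h => absurd (hinj h) (ne_of_gt (Finset.mem_Ioi.mp hj)).symm)
  have hkey : (sylvester M N f g).det * (∏ i : Fin (N + M), ∏ j ∈ Finset.Ioi i, (t i - t j))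
      = (∏ i, g.eval (x i)) * (∏ i : Fin (N + M), ∏ j ∈ Finset.Ioi i, (t i - t j)) := by
    rw [← detRV t]
    rw [show (Matrix.of fun i j : Fin (N + M) => t j ^ (N + M - 1 - (i : ℕ))) = V from rfl]
    rw [← Matrix.det_mul, ← Matrix.det_submatrix_equiv_self
      (finSumFinEquiv (m := N) (n := M)) (sylvester M N f g * V), hsub,
      Matrix.det_fromBlocks_zero₂₁, hdetP, hdetQ, detRV, htprod]
    simp only [hfy]
    rw [Finset.prod_comm (f := fun b l => y b - x l)]
    ring
  exact mul_right_cancel₀ htne hkey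

end SylvesterDet

section ComplexSide

noncomputable def ww : ℂ := Complex.I * (Real.sqrt 3 : ℝ)

lemma hww : ww ^ 2 = -3 := by
  rw [ww, mul_pow, Complex.I_sq]
  norm_cast
  rw [Real.sq_sqrt (by norm_num : (3:ℝ) ≥ 0)]
  norm_num

lemma hww0 : ww ≠ 0 := by
  intro h
  have := hww
  rw [h] at this
  norm_num at this

noncomputable def zz : ℂ := (1 + ww) / 2
noncomputable def zzb : ℂ := (1 - ww) / 2
noncomputable def Aa (m : ℚ) : ℂ := 1 / 2 + (2 * m + 1) * ww / 6
noncomputable def Bb (m : ℚ) : ℂ := 1 / 2 - (2 * m + 1) * ww / 6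

lemma hApB (m : ℚ) : Aa m + Bb m = 1 := by rw [Aa, Bb]; ring

lemma hAB (m : ℚ) : Aa m * Bb m = ((m : ℂ) ^ 2 + m + 1) / 3 := by
  rw [Aa, Bb]
  linear_combination (-(2*(m:ℂ)+1)^2/36) * hww

lemma hq0 (m : ℚ) : ((m : ℂ) ^ 2 + m + 1) ≠ 0 := by
  have h : ((m : ℚ) ^ 2 + m + 1) ≠ 0 := by nlinarith [sq_nonneg (2 * m + 1)]
  intro hc
  apply h
  have : (((m ^ 2 + m + 1 : ℚ) : ℂ)) = 0 := by push_cast; exact hc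
  exact_mod_cast this

lemma hA0 (m : ℚ) : Aa m ≠ 0 := by
  intro h
  have := hAB m
  rw [h, zero_mul] at this
  field_simp at this
  exact hq0 m (by linear_combination this.symm)

lemma hB0 (m : ℚ) : Bb m ≠ 0 := by
  intro h
  have := hAB m
  rw [h, mul_zero] at this
  field_simp at this
  exact hq0 m (by linear_combination this.symm)

lemma gcoef_rec (m : ℚ) (k : ℕ) : gcoef m (k + 2) = gcoef m (k + 1) - gcoef m k := by
  have h : k % 6 = 0 ∨ k % 6 = 1 ∨ k % 6 = 2 ∨ k % 6 = 3 ∨ k % 6 = 4 ∨ k % 6 = 5 := by omega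
  unfold gcoef
  rcases h with h|h|h|h|h|h <;>
    rw [h, (by omega : (k + 1) % 6 = (k % 6 + 1) % 6), (by omega : (k + 2) % 6 = (k % 6 + 2) % 6),
      h] <;> norm_num <;> ring

lemma srec (m : ℚ) (k : ℕ) :
    Aa m * zz ^ (k + 2) + Bb m * zzb ^ (k + 2)
      = (Aa m * zz ^ (k + 1) + Bb m * zzb ^ (k + 1)) - (Aa m * zz ^ k + Bb m * zzb ^ k) := by
  simp only [zz, zzb]
  linear_combination ((Aa m * ((1 + ww)/2) ^ k + Bb m * ((1 - ww)/2) ^ k) / 4) * hww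

lemma gs (m : ℚ) (k : ℕ) : ((gcoef m k : ℚ) : ℂ) = Aa m * zz ^ k + Bb m * zzb ^ k := by
  induction k using Nat.strong_induction_on with
  | _ k ih =>
    match k with
    | 0 =>
      have h0 : gcoef m 0 = 1 := rfl
      rw [h0]
      push_cast
      rw [pow_zero, pow_zero, mul_one, mul_one, hApB]
    | 1 =>
      have h1 : gcoef m 1 = -m := rfl
      rw [h1]
      push_cast
      simp only [pow_one, Aa, Bb, zz, zzb]
      linear_combination (-(2*(m:ℂ)+1)/6) * hww
    | (k + 2) =>
      rw [gcoef_rec m k, srec m k]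
      push_cast
      rw [ih (k + 1) (by omega), ih k (by omega)]

noncomputable def Fc (m : ℚ) (n : ℕ) : ℂ[X] :=
  C (Aa m) * (X + C zz) ^ n + C (Bb m) * (X + C zzb) ^ n

lemma fpol_map (m : ℚ) (n : ℕ) : (fpol m n).map (algebraMap ℚ ℂ) = Fc m n := by
  rw [fpol, Polynomial.map_sum, Fc, add_pow, add_pow, Finset.mul_sum, Finset.mul_sum,
    ← Finset.sum_add_distrib]
  refine Finset.sum_congr rfl fun i hi => ?_
  rw [Polynomial.map_mul, Polynomial.map_pow, Polynomial.map_C, Polynomial.map_X]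
  have h1 : (algebraMap ℚ ℂ) ((n.choose i : ℚ) * gcoef m (n - i))
      = (n.choose i : ℂ) * ((gcoef m (n - i) : ℚ) : ℂ) := by
    rw [eq_ratCast (algebraMap ℚ ℂ)]; push_cast; ring
  rw [h1, gs]
  simp only [C_mul, C_add, C_pow, ← Polynomial.C_eq_natCast]
  ring

lemma Fc_deriv (m : ℚ) (n : ℕ) : derivative (Fc m n)
    = C ((n : ℂ)) * (C (Aa m) * (X + C zz) ^ (n - 1) + C (Bb m) * (X + C zzb) ^ (n - 1)) := by
  rw [Fc, derivative_add]
  simp only [derivative_C_mul, Polynomial.derivative_pow, derivative_add, derivative_X,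
    derivative_C, add_zero, mul_one]
  ring

lemma poly_eq_aux {n : ℕ} (p q : ℂ[X]) (u : Fin n → ℂ) (hu : Function.Injective u)
    (hp : p.natDegree ≤ n) (hq : q.natDegree ≤ n) (hlc : p.coeff n = q.coeff n)
    (he : ∀ k, p.eval (u k) = q.eval (u k)) : p = q := by
  by_contra hne
  have h0 : p - q ≠ 0 := sub_ne_zero.mpr hne
  have hle : (p - q).natDegree ≤ n := le_trans (Polynomial.natDegree_sub_le p q) (max_le hp hq)
  have hdeg : (p - q).natDegree < n := by
    refine lt_of_le_of_ne hle fun hEq => ?_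
    have : (p - q).coeff n = 0 := by rw [Polynomial.coeff_sub, hlc]; ring
    rw [← hEq] at this
    exact h0 (Polynomial.leadingCoeff_eq_zero.mp this)
  refine h0 (Polynomial.eq_zero_of_natDegree_lt_card_of_eval_eq_zero (p - q) hu
    (fun i => by rw [Polynomial.eval_sub, he i]; ring) ?_)
  simpa using hdeg

lemma coeff_pow_XC (D : ℕ) (z : ℂ) : ((X + C z) ^ D).coeff D = 1 := by
  have hm : ((X + C z) ^ D).Monic := (monic_X_add_C z).pow D
  have hd : ((X + C z) ^ D).natDegree = D := by
    rw [Polynomial.natDegree_pow, Polynomial.natDegree_X_add_C, mul_one]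
  have := hm.coeff_natDegree
  rwa [hd] at this

lemma prod_XC_monic {D : ℕ} (u : Fin D → ℂ) : (∏ k, (X - C (u k))).Monic :=
  monic_prod_of_monic _ _ (fun k _ => monic_X_sub_C _)

lemma prod_XC_natDegree {D : ℕ} (u : Fin D → ℂ) : (∏ k, (X - C (u k))).natDegree = D := by
  rw [Polynomial.natDegree_prod _ _ (fun k _ => Polynomial.X_sub_C_ne_zero _)]
  simp [Polynomial.natDegree_X_sub_C]

lemma factor_lemma (m : ℚ) (D : ℕ) (u : Fin D → ℂ)
    (hupow : ∀ k, Aa m * (u k) ^ D + Bb m = 0) (hu1 : ∀ k, (1 : ℂ) - u k ≠ 0)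
    (hxinj : Function.Injective (fun k => (u k * zzb - zz) / (1 - u k))) :
    C (Aa m) * (X + C zz) ^ D + C (Bb m) * (X + C zzb) ^ D
      = ∏ k : Fin D, (X - C ((u k * zzb - zz) / (1 - u k))) := by
  set xx : Fin D → ℂ := fun k => (u k * zzb - zz) / (1 - u k) with hxx
  refine poly_eq_aux _ _ xx hxinj ?_ ?_ ?_ ?_
  · refine le_trans (Polynomial.natDegree_add_le _ _) (max_le ?_ ?_) <;>
    · refine le_trans (Polynomial.natDegree_C_mul_le _ _) ?_
      rw [Polynomial.natDegree_pow, Polynomial.natDegree_X_add_C, mul_one]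
  · exact le_of_eq (prod_XC_natDegree xx)
  · rw [Polynomial.coeff_add, Polynomial.coeff_C_mul, Polynomial.coeff_C_mul,
      coeff_pow_XC, coeff_pow_XC]
    have h2 := (prod_XC_monic xx).coeff_natDegree
    rw [prod_XC_natDegree xx] at h2
    rw [h2, mul_one, mul_one, hApB]
  · intro k
    have hxz : xx k + zz = u k * ((zzb - zz) / (1 - u k)) := by
      rw [hxx]
      field_simp [hu1 k]
      ring
    have hxzb : xx k + zzb = (zzb - zz) / (1 - u k) := by
      rw [hxx]
      field_simp [hu1 k]
      ring
    have hr : Polynomial.eval (xx k) (∏ j : Fin D, (X - C (xx j))) = 0 := by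
      rw [Polynomial.eval_prod]
      exact Finset.prod_eq_zero (Finset.mem_univ k) (by simp)
    rw [hr]
    simp only [Polynomial.eval_add, Polynomial.eval_mul, Polynomial.eval_C,
      Polynomial.eval_pow, Polynomial.eval_add, Polynomial.eval_X]
    rw [hxz, hxzb, mul_pow]
    linear_combination (((zzb - zz) / (1 - u k)) ^ D) * hupow k

lemma moeb_inj {a b : ℂ} (ha : (1 : ℂ) - a ≠ 0) (hb : (1 : ℂ) - b ≠ 0)
    (h : (a * zzb - zz) / (1 - a) = (b * zzb - zz) / (1 - b)) : a = b := by
  field_simp at h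
  have hzw : zz - zzb = ww := by rw [zz, zzb]; ring
  have h2 : (a - b) * (zz - zzb) = 0 := by linear_combination -h
  rw [hzw] at h2
  rcases mul_eq_zero.mp h2 with h3 | h3
  · exact sub_eq_zero.mp h3
  · exact absurd h3 hww0

lemma roots_family (D : ℕ) (hD : D ≠ 0) (c : ℂ) (hc0 : c ≠ 0) :
    ∃ u : Fin D → ℂ, Function.Injective u ∧ ∀ k, (u k) ^ D = c := by
  obtain ⟨ρ, hρ⟩ := IsAlgClosed.exists_pow_nat_eq c (Nat.pos_of_ne_zero hD)
  have hω := Complex.isPrimitiveRoot_exp D hD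
  have hρ0 : ρ ≠ 0 := fun h => hc0 (by rw [← hρ, h, zero_pow hD])
  refine ⟨fun k => ρ * (Complex.exp (2 * Real.pi * Complex.I / D)) ^ (k : ℕ), ?_, ?_⟩
  · intro a b h
    have h2 := mul_left_cancel₀ hρ0 h
    exact Fin.ext (hω.pow_inj a.isLt b.isLt h2)
  · intro k
    rw [mul_pow, ← pow_mul, mul_comm (k : ℕ) D, pow_mul, hω.pow_eq_one, one_pow, mul_one, hρ]

lemma append_inj {α : Type*} {N M : ℕ} {y : Fin N → α} {x : Fin M → α}
    (hy : Function.Injective y) (hx : Function.Injective x)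
    (hyx : ∀ a b, y a ≠ x b) : Function.Injective (Fin.append y x) := by
  have hv1 : ∀ (i : Fin (N + M)) (h : (i : ℕ) < N),
      Fin.append y x i = y ⟨(i : ℕ), h⟩ := by
    intro i h
    have hi' : i = Fin.castAdd M ⟨(i : ℕ), h⟩ := Fin.ext rfl
    conv_lhs => rw [hi']
    rw [Fin.append_left]
  have hv2 : ∀ (i : Fin (N + M)) (h : ¬ (i : ℕ) < N),
      Fin.append y x i = x ⟨(i : ℕ) - N, by have := i.isLt; omega⟩ := by
    intro i h
    have hi' : i = Fin.natAdd N ⟨(i : ℕ) - N, by have := i.isLt; omega⟩ := by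
      apply Fin.ext; simp; omega
    conv_lhs => rw [hi']
    rw [Fin.append_right]
  intro i j h
  by_cases hi : (i : ℕ) < N <;> by_cases hj : (j : ℕ) < N
  · rw [hv1 i hi, hv1 j hj] at h
    have := congrArg Fin.val (hy h)
    simp at this
    exact Fin.ext this
  · rw [hv1 i hi, hv2 j hj] at h
    exact absurd h (hyx _ _)
  · rw [hv2 i hi, hv1 j hj] at h
    exact absurd h.symm (hyx _ _)
  · rw [hv2 i hi, hv2 j hj] at h
    have := congrArg Fin.val (hx h)
    simp at this
    apply Fin.ext
    omega

lemma sylvester_map {R S : Type*} [CommRing R] [CommRing S] (φ : R →+* S) (M N : ℕ)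
    (f g : R[X]) :
    sylvester M N (f.map φ) (g.map φ) = (sylvester M N f g).map φ := by
  ext i j
  simp [_root_.sylvester, apply_ite φ, Polynomial.coeff_map]

lemma res_map {R S : Type*} [CommRing R] [CommRing S] (φ : R →+* S) (M N : ℕ) (f g : R[X]) :
    res M N (f.map φ) (g.map φ) = φ (res M N f g) := by
  rw [res, res, sylvester_map, RingHom.map_det]
  rfl

end ComplexSide

set_option maxHeartbeats 1600000 in
theorem stmt15 (n : ℕ) (hn : 2 ≤ n) (m : ℚ) :
    (-1) ^ (n * (n - 1) / 2) * res n (n - 1) (fpol m n) (derivative (fpol m n)) =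
      3 ^ ((n - 1) * (n - 2) / 2) * (n : ℚ) ^ n * (m ^ 2 + m + 1) ^ (n - 1) := by
  obtain ⟨a, rfl⟩ : ∃ a, n = a + 2 := ⟨n - 2, by omega⟩
  rw [show a + 2 - 1 = a + 1 from rfl, show a + 2 - 2 = a from rfl]
  obtain ⟨k, hk⟩ : ∃ k, a * (a + 1) = 2 * k := by
    rcases Nat.even_mul_succ_self a with ⟨k, hk⟩
    exact ⟨k, by omega⟩
  have hEe : (a + 2) * (a + 1) / 2 = k + (a + 1) := by
    have h1 : (a + 2) * (a + 1) = a * (a + 1) + 2 * (a + 1) := by ring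
    omega
  have hE2 : (a + 1) * a / 2 = k := by
    have h1 : (a + 1) * a = a * (a + 1) := by ring
    omega
  rw [hEe, hE2]
  apply (algebraMap ℚ ℂ).injective
  have hφ : ∀ q : ℚ, algebraMap ℚ ℂ q = (q : ℂ) := fun q => eq_ratCast _ q
  rw [hφ, hφ]
  push_cast
  have hres : ((res (a + 2) (a + 1) (fpol m (a + 2)) (derivative (fpol m (a + 2))) : ℚ) : ℂ)
      = res (a + 2) (a + 1) ((fpol m (a + 2)).map (algebraMap ℚ ℂ))
          ((derivative (fpol m (a + 2))).map (algebraMap ℚ ℂ)) := by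
    rw [res_map, hφ]
  rw [hres, ← Polynomial.derivative_map, fpol_map]
  -- complex setup
  have hA := hA0 m
  have hB := hB0 m
  set c : ℂ := -(Bb m) / (Aa m) with hc
  have hc0 : c ≠ 0 := div_ne_zero (neg_ne_zero.mpr hB) hA
  have hc1 : c ≠ 1 := by
    intro h
    rw [hc, div_eq_one_iff_eq hA] at h
    have h2 := hApB m
    rw [← h] at h2
    simp at h2
  obtain ⟨μ, hμinj, hμpow⟩ := roots_family (a + 2) (by omega) c hc0
  obtain ⟨ν, hνinj, hνpow⟩ := roots_family (a + 1) (by omega) c hc0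
  have hupow : ∀ kk, Aa m * (μ kk) ^ (a + 2) + Bb m = 0 := by
    intro kk; rw [hμpow kk, hc]; field_simp; ring
  have hvpow : ∀ j, Aa m * (ν j) ^ (a + 1) + Bb m = 0 := by
    intro j; rw [hνpow j, hc]; field_simp; ring
  have hμ1 : ∀ kk, (1 : ℂ) - μ kk ≠ 0 := by
    intro kk h
    apply hc1
    rw [← hμpow kk, show μ kk = 1 from by linear_combination -h, one_pow]
  have hν1 : ∀ j, (1 : ℂ) - ν j ≠ 0 := by
    intro j h
    apply hc1
    rw [← hνpow j, show ν j = 1 from by linear_combination -h, one_pow]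
  set x : Fin (a + 2) → ℂ := fun kk => (μ kk * zzb - zz) / (1 - μ kk) with hxdef
  set y : Fin (a + 1) → ℂ := fun j => (ν j * zzb - zz) / (1 - ν j) with hydef
  have hxinj : Function.Injective x := fun p q h => hμinj (moeb_inj (hμ1 p) (hμ1 q) h)
  have hyinj : Function.Injective y := fun p q h => hνinj (moeb_inj (hν1 p) (hν1 q) h)
  have hyx : ∀ p q, y p ≠ x q := by
    intro p q h
    have he : ν p = μ q := moeb_inj (hν1 p) (hμ1 q) h
    have h2 : c * 1 = c * μ q := by
      rw [mul_one]
      conv_lhs => rw [← hμpow q]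
      rw [pow_succ, ← he, hνpow p]
    have h3 := mul_left_cancel₀ hc0 h2
    exact hμ1 q (by rw [← h3]; ring)
  have hinj := append_inj hyinj hxinj hyx
  have hF : Fc m (a + 2) = ∏ kk : Fin (a + 2), (X - C (x kk)) := by
    rw [Fc]
    exact factor_lemma m (a + 2) μ hupow hμ1 hxinj
  have hG : derivative (Fc m (a + 2))
      = C (((a + 2 : ℕ)) : ℂ) * ∏ j : Fin (a + 1), (X - C (y j)) := by
    rw [Fc_deriv]
    rw [show (a + 2 - 1) = a + 1 from rfl]
    rw [factor_lemma m (a + 1) ν hvpow hν1 hyinj]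
  rw [hG, hF]
  simp only [res]
  rw [sylvester_det (by omega) (by omega) x y (((a + 2 : ℕ)) : ℂ) hinj]
  -- evaluate the product
  set W : ℂ := zzb - zz with hW
  have hW2 : W ^ 2 = -3 := by rw [hW, zz, zzb]; linear_combination hww
  have hGx : ∀ kk : Fin (a + 2),
      Polynomial.eval (x kk) (C (((a + 2 : ℕ)) : ℂ) * ∏ j : Fin (a + 1), (X - C (y j)))
        * (μ kk * (1 - μ kk) ^ a) = -(((a + 2 : ℕ)) : ℂ) * Bb m * W ^ (a + 1) := by
    intro kk
    rw [← factor_lemma m (a + 1) ν hvpow hν1 hyinj]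
    simp only [Polynomial.eval_mul, Polynomial.eval_C, Polynomial.eval_add,
      Polynomial.eval_pow, Polynomial.eval_X]
    have hxz : x kk + zz = μ kk * (W / (1 - μ kk)) := by
      rw [hxdef, hW]; field_simp [hμ1 kk]; ring
    have hxzb : x kk + zzb = W / (1 - μ kk) := by
      rw [hxdef, hW]; field_simp [hμ1 kk]; ring
    rw [hxz, hxzb, mul_pow, div_pow]
    have hkey : (Aa m * μ kk ^ (a + 1) + Bb m) * μ kk = -(Bb m) * (1 - μ kk) := by
      linear_combination hupow kk
    have hsplit : (1 - μ kk) ^ (a + 1) = (1 - μ kk) ^ a * (1 - μ kk) := pow_succ _ _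
    rw [hsplit]
    field_simp [hμ1 kk]
    linear_combination ((((a + 2 : ℕ) : ℂ)) * W ^ (a + 1)) * hkey
  have hprodform :
      (∏ kk, Polynomial.eval (x kk) (C (((a + 2 : ℕ)) : ℂ) * ∏ j : Fin (a + 1), (X - C (y j))))
        * ((∏ kk, μ kk) * (∏ kk, (1 - μ kk)) ^ a)
      = (-(((a + 2 : ℕ)) : ℂ) * Bb m * W ^ (a + 1)) ^ (a + 2) := by
    rw [← Finset.prod_pow, ← Finset.prod_mul_distrib, ← Finset.prod_mul_distrib]
    rw [Finset.prod_congr rfl fun kk _ => hGx kk]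
    rw [Finset.prod_const, Finset.card_univ, Fintype.card_fin]
  have hMu : (∏ kk : Fin (a + 2), (X - C (μ kk))) = X ^ (a + 2) - C c := by
    refine (poly_eq_aux (X ^ (a + 2) - C c) _ μ hμinj ?_ ?_ ?_ ?_).symm
    · refine le_trans (Polynomial.natDegree_sub_le _ _) (max_le ?_ ?_)
      · rw [Polynomial.natDegree_X_pow]
      · simp
    · exact le_of_eq (prod_XC_natDegree μ)
    · rw [Polynomial.coeff_sub, Polynomial.coeff_X_pow, if_pos rfl,
        Polynomial.coeff_C, if_neg (by omega), sub_zero]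
      have h2 := (prod_XC_monic μ).coeff_natDegree
      rw [prod_XC_natDegree μ] at h2
      rw [h2]
    · intro kk
      rw [Polynomial.eval_sub, Polynomial.eval_pow, Polynomial.eval_X, Polynomial.eval_C,
        hμpow kk, sub_self]
      rw [Polynomial.eval_prod]
      exact (Finset.prod_eq_zero (Finset.mem_univ kk) (by simp)).symm
  have h0 := congrArg (Polynomial.eval 0) hMu
  have h1 := congrArg (Polynomial.eval 1) hMu
  rw [Polynomial.eval_prod] at h0 h1
  simp only [Polynomial.eval_sub, Polynomial.eval_pow, Polynomial.eval_X,
    Polynomial.eval_C] at h0 h1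
  rw [zero_pow (by omega : a + 2 ≠ 0), zero_sub] at h0
  rw [one_pow] at h1
  rw [Finset.prod_congr rfl (fun kk _ => show (0 : ℂ) - μ kk = (-1) * μ kk from by ring),
    Finset.prod_mul_distrib, Finset.prod_const, Finset.card_univ, Fintype.card_fin] at h0
  -- h0 : (-1)^(a+2) * ∏ μ = -c ; h1 : ∏ (1 - μ) = 1 - c
  have hsq : ((-1 : ℂ)) ^ (a + 2) * ((-1 : ℂ)) ^ (a + 2) = 1 := by
    rw [← pow_add, show (a + 2) + (a + 2) = 2 * (a + 2) from by ring, pow_mul]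
    norm_num
  have hpμ : (∏ kk, μ kk) = (-1 : ℂ) ^ (a + 2) * -c := by
    calc (∏ kk, μ kk) = ((-1 : ℂ) ^ (a + 2) * (-1 : ℂ) ^ (a + 2)) * ∏ kk, μ kk := by
          rw [hsq, one_mul]
      _ = (-1 : ℂ) ^ (a + 2) * ((-1 : ℂ) ^ (a + 2) * ∏ kk, μ kk) := by ring
      _ = (-1 : ℂ) ^ (a + 2) * -c := by rw [h0]
  have h1c : (1 : ℂ) - c = 1 / Aa m := by
    rw [hc]
    field_simp
    linear_combination hApB m
  have hZne : (∏ kk, μ kk) * (∏ kk, (1 - μ kk)) ^ a ≠ 0 := by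
    rw [hpμ, h1, h1c]
    apply mul_ne_zero
    · apply mul_ne_zero (pow_ne_zero _ (by norm_num)) (neg_ne_zero.mpr hc0)
    · exact pow_ne_zero _ (by simp [hA])
  refine mul_right_cancel₀ hZne ?_
  calc ((-1 : ℂ) ^ (k + (a + 1)) *
        ∏ kk, Polynomial.eval (x kk) (C (((a + 2 : ℕ)) : ℂ) * ∏ j : Fin (a + 1), (X - C (y j))))
        * ((∏ kk, μ kk) * (∏ kk, (1 - μ kk)) ^ a)
      = (-1 : ℂ) ^ (k + (a + 1)) *
        ((∏ kk, Polynomial.eval (x kk) (C (((a + 2 : ℕ)) : ℂ) * ∏ j : Fin (a + 1), (X - C (y j))))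
          * ((∏ kk, μ kk) * (∏ kk, (1 - μ kk)) ^ a)) := by ring
    _ = (-1 : ℂ) ^ (k + (a + 1)) * (-(((a + 2 : ℕ)) : ℂ) * Bb m * W ^ (a + 1)) ^ (a + 2) := by
        rw [hprodform]
    _ = 3 ^ k * ((a : ℂ) + 2) ^ (a + 2) * (((m : ℂ)) ^ 2 + (m : ℂ) + 1) ^ (a + 1) *
        ((∏ kk, μ kk) * (∏ kk, (1 - μ kk)) ^ a) := by
        have hmc : -c = Bb m / Aa m := by rw [hc]; ring
        have hq3 : (((m : ℂ)) ^ 2 + (m : ℂ) + 1) = 3 * (Aa m * Bb m) := by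
          rw [hAB]; ring
        have hWp : (W ^ (a + 1)) ^ (a + 2) = (-1 : ℂ) ^ (k + (a + 1)) * 3 ^ (k + (a + 1)) := by
          rw [← pow_mul, show (a + 1) * (a + 2) = 2 * (k + (a + 1)) from by
            have h1' : (a + 1) * (a + 2) = a * (a + 1) + 2 * (a + 1) := by ring
            omega, pow_mul, hW2]
          rw [show (-3 : ℂ) = (-1) * 3 from by norm_num, mul_pow]
        rw [hpμ, h1, h1c, hmc, hq3]
        rw [show -((((a + 2 : ℕ)) : ℂ)) * Bb m * W ^ (a + 1)
              = (-1) * ((((a + 2 : ℕ)) : ℂ) * (Bb m * W ^ (a + 1))) from by ring]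
        rw [mul_pow ((-1 : ℂ)) _ (a + 2), mul_pow, mul_pow, hWp]
        push_cast
        set s : ℂ := (-1 : ℂ) ^ (k + (a + 1)) with hsdef
        have hs2 : s * s = 1 := by
          rw [hsdef, ← pow_add,
            show (k + (a + 1)) + (k + (a + 1)) = 2 * (k + (a + 1)) from by ring, pow_mul]
          norm_num
        field_simp
        have hAa : Aa m ^ a * (1 / Aa m) ^ a = 1 := by rw [← mul_pow, mul_one_div_cancel hA, one_pow]
        linear_combination (((a : ℂ) + 2) ^ (a + 2) * Bb m ^ (a + 2)
          * 3 ^ (k + (a + 1)) * Aa m) * hs2 - (((a : ℂ) + 2) ^ (a + 2) * Bb m ^ (a + 2)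
          * 3 ^ (k + (a + 1)) * Aa m) * hAa
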